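/- Let q₀ ≥ ⋯ ≥ q_{n−1} be reals and m ≥ 1 with n ≥ 2m+1. Among all ways to append m real values to q₀,…,q_{n−1}, the m-trimmed mean (average after removing the m largest and m smallest of the n+m values) is at least (1/(n−m))·Σ_{h=m}^{n−1} q_h, with equality when all m appended values are below q_{n−1}. -/

import Mathlib

/-!
Sort the `n + m` values increasingly. The `q`'s, sorted increasingly as `q (n-1), …, q 0`, form a
sublist of the sorted list, so their `i`-th entry is at most the `(m + i)`-th entry of the whole
list: at most `m` appended values can come before it. Summing over `i < n - m` bounds the trimmed
sum from below by `q m + ⋯ + q (n-1)`. When every appended value lies below `q (n-1)`, the sorted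
list is the appended values followed by the `q`'s, and the trimmed window is exactly
`q (n-1), …, q m`.
-/

open Finset

/-- Median of a multiset of reals: average of the two middle order statistics
(equal to the middle one for odd cardinality). -/
noncomputable def med (s : Multiset ℝ) : ℝ :=
  ((s.sort (· ≤ ·)).getD ((Multiset.card s - 1) / 2) 0 +
    (s.sort (· ≤ ·)).getD (Multiset.card s / 2) 0) / 2

/-- `m`-trimmed mean: remove the `m` largest and `m` smallest values and average the rest. -/
noncomputable def trimmedMean (m : ℕ) (s : Multiset ℝ) : ℝ :=
  ((((s.sort (· ≤ ·)).drop m).take (Multiset.card s - 2 * m)).sum) /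
    ((Multiset.card s : ℝ) - 2 * m)

/-- The multiset of the first `n` values of `q`. -/
noncomputable def qMs (n : ℕ) (q : ℕ → ℝ) : Multiset ℝ :=
  (Finset.range n).val.map q

namespace List

theorem Sublist.getElem_le_getElem_of_pairwise {α : Type*} [Preorder α] {l₁ l₂ : List α}
    (h : l₁ <+ l₂) (hl₂ : l₂.Pairwise (· ≤ ·)) {i j : ℕ} (hi : i < l₁.length) (hj : j < l₂.length)
    (hij : l₂.length - j ≤ l₁.length - i) : l₁[i] ≤ l₂[j] := by
  induction h generalizing i j with
  | slnil => simp at hi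
  | @cons l₁ l₂ a h ih =>
    have := h.length_le
    obtain _ | j := j
    · simp only [length_cons, Nat.sub_zero] at hij; omega
    · exact ih hl₂.of_cons hi (by simpa using hj) (by simpa using hij)
  | @cons_cons l₁ l₂ a h ih =>
    have := h.length_le
    obtain _ | i := i
    · obtain _ | j := j
      · exact le_rfl
      · exact (pairwise_cons.mp hl₂).1 _ (getElem_mem _)
    · obtain _ | j := j
      · simp only [length_cons, Nat.sub_zero] at hij; omega
      · exact ih hl₂.of_cons (by simpa using hi) (by simpa using hj) (by simpa using hij)

theorem Sublist.sum_take_le_sum_take_drop {α : Type*} [AddCommMonoid α] [PartialOrder α]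
    [IsOrderedAddMonoid α] {l₁ l₂ : List α} (h : l₁ <+ l₂) (hl₂ : l₂.Pairwise (· ≤ ·)) (k : ℕ) :
    (l₁.take k).sum ≤ ((l₂.drop (l₂.length - l₁.length)).take k).sum := by
  have := h.length_le
  refine Forall₂.sum_le_sum (forall₂_iff_get.mpr ⟨by simp only [length_take, length_drop]; omega, fun i hi₁ hi₂ => ?_⟩)
  simp only [get_eq_getElem, getElem_take, getElem_drop]
  exact h.getElem_le_getElem_of_pairwise hl₂ _ _ (by rw [length_take] at hi₁; omega)

end List

namespace Multiset

variable {α : Type*} [LinearOrder α]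

theorem sort_sublist_sort_of_le {s t : Multiset α} (h : s ≤ t) :
    (s.sort (· ≤ ·)).Sublist (t.sort (· ≤ ·)) := by
  refine List.sublist_of_subperm_of_pairwise ?_ (pairwise_sort _ _) (pairwise_sort _ _)
  rwa [← coe_le, sort_eq, sort_eq]

theorem sort_add_of_forall_le {s t : Multiset α} (h : ∀ x ∈ s, ∀ y ∈ t, x ≤ y) :
    (s + t).sort (· ≤ ·) = s.sort (· ≤ ·) ++ t.sort (· ≤ ·) := by
  refine List.Perm.eq_of_pairwise' (pairwise_sort _ _) ?_ ?_
  · exact List.pairwise_append.mpr ⟨pairwise_sort _ _, pairwise_sort _ _,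
      fun x hx y hy => h x ((mem_sort _).mp hx) y ((mem_sort _).mp hy)⟩
  · rw [← coe_eq_coe, ← coe_add, sort_eq, sort_eq, sort_eq]

end Multiset

open Multiset

theorem trimmedMean_add_eq {s t : Multiset ℝ} {n m : ℕ} (hs : card s = n) (ht : card t = m) :
    trimmedMean m (s + t) =
      ((((s + t).sort (· ≤ ·)).drop m).take (n - m)).sum / ((n : ℝ) - m) := by
  rw [trimmedMean, card_add, hs, ht, two_mul, ← Nat.sub_sub, Nat.add_sub_cancel]
  push_cast
  ring_nf

theorem sum_take_sort_div_le_trimmedMean_add {s t : Multiset ℝ} {n m : ℕ} (hmn : m ≤ n)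
    (hs : card s = n) (ht : card t = m) :
    ((s.sort (· ≤ ·)).take (n - m)).sum / ((n : ℝ) - m) ≤ trimmedMean m (s + t) := by
  rw [trimmedMean_add_eq hs ht]
  have hsub := (sort_sublist_sort_of_le (le_add_right s t)).sum_take_le_sum_take_drop
    (pairwise_sort _ _) (n - m)
  simp only [Multiset.length_sort, card_add, hs, ht, Nat.add_sub_cancel_left] at hsub
  gcongr
  exact sub_nonneg.mpr (by exact_mod_cast hmn)

theorem trimmedMean_add_of_forall_le {s t : Multiset ℝ} {n m : ℕ} (hs : card s = n)
    (ht : card t = m) (h : ∀ x ∈ t, ∀ y ∈ s, x ≤ y) :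
    trimmedMean m (s + t) = ((s.sort (· ≤ ·)).take (n - m)).sum / ((n : ℝ) - m) := by
  rw [trimmedMean_add_eq hs ht, add_comm, sort_add_of_forall_le h,
    List.drop_left' ((Multiset.length_sort _).trans ht)]

theorem card_qMs (n : ℕ) (q : ℕ → ℝ) : card (qMs n q) = n := by
  simp [qMs]

theorem sort_qMs {n : ℕ} {q : ℕ → ℝ} (hq : AntitoneOn q (Set.Iio n)) :
    (qMs n q).sort (· ≤ ·) = ((List.range n).map q).reverse := by
  refine List.Perm.eq_of_pairwise' (pairwise_sort _ _) ?_ ?_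
  · rw [List.pairwise_reverse, List.pairwise_map]
    exact List.pairwise_lt_range.imp_of_mem fun {i j} hi hj hij =>
      hq (List.mem_range.mp hi) (List.mem_range.mp hj) hij.le
  · rw [← coe_eq_coe, Multiset.sort_eq, Multiset.coe_reverse]
    rfl

theorem sum_take_sort_qMs {n m : ℕ} {q : ℕ → ℝ} (hq : AntitoneOn q (Set.Iio n)) (hmn : m ≤ n) :
    (((qMs n q).sort (· ≤ ·)).take (n - m)).sum = ∑ h ∈ Ico m n, q h := by
  rw [sort_qMs hq, List.take_reverse, List.sum_reverse, List.length_map, List.length_range,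
    ← List.map_drop, Nat.sub_sub_self hmn, List.range_eq_range', List.drop_range',
    Nat.Ico_eq_range', zero_add, mul_one]
  rfl

theorem stmt8_general (n m : ℕ) (hn : 2 * m + 1 ≤ n) (q : ℕ → ℝ)
    (hq : ∀ i j, i ≤ j → j < n → q j ≤ q i) :
    (∀ t : Multiset ℝ, Multiset.card t = m →
      (∑ h ∈ Finset.Ico m n, q h) / ((n : ℝ) - m) ≤ trimmedMean m (qMs n q + t)) ∧
    (∀ t : Multiset ℝ, Multiset.card t = m → (∀ x ∈ t, x < q (n - 1)) →
      trimmedMean m (qMs n q + t) = (∑ h ∈ Finset.Ico m n, q h) / ((n : ℝ) - m)) := by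
  have hmn : m ≤ n := by omega
  have hsum := sum_take_sort_qMs (fun i _ j hj hij => hq i j hij hj) hmn
  refine ⟨fun t ht => ?_, fun t ht hlt => ?_⟩
  · rw [← hsum]
    exact sum_take_sort_div_le_trimmedMean_add hmn (card_qMs n q) ht
  · rw [← hsum]
    refine trimmedMean_add_of_forall_le (card_qMs n q) ht fun x hx y hy => ?_
    obtain ⟨i, hi, rfl⟩ := Multiset.mem_map.mp hy
    exact (hlt x hx).le.trans (hq i (n - 1) (by rw [Finset.mem_val, Finset.mem_range] at hi; omega) (by omega))

theorem stmt8 (n m : ℕ) (hm : 1 ≤ m) (hn : 2 * m + 1 ≤ n) (q : ℕ → ℝ)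
    (hq : ∀ i j, i ≤ j → j < n → q j ≤ q i) :
    (∀ t : Multiset ℝ, Multiset.card t = m →
      (∑ h ∈ Finset.Ico m n, q h) / ((n : ℝ) - m) ≤ trimmedMean m (qMs n q + t)) ∧
    (∀ t : Multiset ℝ, Multiset.card t = m → (∀ x ∈ t, x < q (n - 1)) →
      trimmedMean m (qMs n q + t) = (∑ h ∈ Finset.Ico m n, q h) / ((n : ℝ) - m)) :=
  stmt8_general n m hn q hq
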